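/- arXiv:1202.5572 — 5 statements merged into one kernel-verified Lean document; each statement's English description precedes it below -/
import Mathlib

section
/- Let A = {a_1,...,a_n} ⊂ ℕ^d and let C = f_A((0,1)^d) be the open toric cube. Then for every affine coordinate subspace S ⊆ ℝ^n, the intersection C ∩ S is connected. -/
/-- The monomial map `f_A`. -/
def monomialMap {d n : ℕ} (a : Fin n → Fin d → ℕ) (t : Fin d → ℝ) : Fin n → ℝ :=
  fun i => ∏ j, t j ^ a i j

/-- The open unit cube `(0,1)^d`. -/
def openUnitCube (d : ℕ) : Set (Fin d → ℝ) := Set.pi Set.univ fun _ => Set.Ioo (0 : ℝ) 1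

/-- An affine coordinate subspace in `ℝ^n`: a set `{x | x_j = c_j for j ∈ J}`. -/
def IsAffineCoordSubspace {n : ℕ} (S : Set (Fin n → ℝ)) : Prop :=
  ∃ (J : Finset (Fin n)) (c : Fin n → ℝ), S = {x | ∀ j ∈ J, x j = c j}

/-- The intersection of an open toric cube with any affine coordinate subspace
is connected. -/
theorem openToricCube_inter_affineCoordSubspace_connected {d n : ℕ}
    (a : Fin n → Fin d → ℕ) (S : Set (Fin n → ℝ)) (hS : IsAffineCoordSubspace S) :
    IsPreconnected ((monomialMap a '' openUnitCube d) ∩ S) := by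
  obtain ⟨J, c, rfl⟩ := hS
  set g : (Fin d → ℝ) → (Fin n → ℝ) :=
    fun s => monomialMap a (fun k => Real.exp (-(s k))) with hg
  have hgexp : ∀ (s : Fin d → ℝ) (i : Fin n),
      g s i = Real.exp (∑ k, (-(a i k : ℝ)) * s k) := by
    intro s i
    rw [Real.exp_sum]
    simp only [hg, monomialMap]
    refine Finset.prod_congr rfl fun k _ => ?_
    rw [← Real.exp_nat_mul]
    ring_nf
  have hgpos : ∀ (s : Fin d → ℝ) (i : Fin n), 0 < g s i := by
    intro s i; rw [hgexp]; exact Real.exp_pos _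
  set P : Set (Fin d → ℝ) :=
    (Set.pi Set.univ fun _ => Set.Ioi (0 : ℝ)) ∩ ⋂ j ∈ J, {s | g s j = c j} with hP
  have hPconv : Convex ℝ P := by
    apply Convex.inter
    · exact convex_pi fun i _ => convex_Ioi 0
    · apply convex_iInter; intro j; apply convex_iInter; intro hj
      by_cases hc : 0 < c j
      · set f : (Fin d → ℝ) →ₗ[ℝ] ℝ :=
          ∑ k, (-(a j k : ℝ)) • LinearMap.proj (R := ℝ) (φ := fun _ : Fin d => ℝ) k with hf
        have heq : {s : Fin d → ℝ | g s j = c j} = f ⁻¹' {Real.log (c j)} := by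
          ext s
          simp only [Set.mem_setOf_eq, Set.mem_preimage, Set.mem_singleton_iff, hf,
            LinearMap.coe_sum, Finset.sum_apply, LinearMap.smul_apply,
            LinearMap.proj_apply, smul_eq_mul]
          rw [hgexp]
          exact ⟨fun h => by rw [← h, Real.log_exp], fun h => by rw [h, Real.exp_log hc]⟩
        rw [heq]
        exact Convex.linear_preimage (convex_singleton _) f
      · have heq : {s : Fin d → ℝ | g s j = c j} = (∅ : Set (Fin d → ℝ)) := by
          ext s
          simp only [Set.mem_setOf_eq, Set.mem_empty_iff_false, iff_false]
          intro h
          exact hc (h ▸ hgpos s j)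
        rw [heq]; exact convex_empty
  have hEq : (monomialMap a '' openUnitCube d) ∩ {x | ∀ j ∈ J, x j = c j} = g '' P := by
    ext x
    constructor
    · rintro ⟨⟨t, ht, rfl⟩, hx⟩
      have htpos : ∀ k, 0 < t k ∧ t k < 1 := fun k => ht k (Set.mem_univ k)
      have hgt : g (fun k => -Real.log (t k)) = monomialMap a t := by
        funext i
        simp only [hg, monomialMap, neg_neg]
        refine Finset.prod_congr rfl fun k _ => ?_
        rw [Real.exp_log (htpos k).1]
      refine ⟨fun k => -Real.log (t k), ⟨?_, ?_⟩, hgt⟩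
      · intro k _
        exact neg_pos.mpr (Real.log_neg (htpos k).1 (htpos k).2)
      · simp only [Set.mem_iInter, Set.mem_setOf_eq]
        intro j hj
        rw [hgt]
        exact hx j hj
    · rintro ⟨s, ⟨hs1, hs2⟩, rfl⟩
      refine ⟨⟨fun k => Real.exp (-(s k)), ?_, rfl⟩, ?_⟩
      · intro k _
        refine ⟨Real.exp_pos _, Real.exp_lt_one_iff.mpr ?_⟩
        exact neg_neg_iff_pos.mpr (hs1 k (Set.mem_univ k))
      · intro j hj
        simp only [Set.mem_iInter, Set.mem_setOf_eq] at hs2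
        exact hs2 j hj
  rw [hEq]
  have hgcont : Continuous g := by
    refine continuous_pi fun i => ?_
    exact continuous_finset_prod _ fun k _ =>
      ((Real.continuous_exp.comp (continuous_neg.comp (continuous_apply k))).pow _)
  exact hPconv.isPreconnected.image g hgcont.continuousOn
end

section
/- Let A = {a_1,...,a_n} ⊂ ℕ^d and let C = f_A((0,1)^d) be the open toric cube. Then for every coordinate cone K ⊆ ℝ^n, the intersection C ∩ K is connected. -/
/-- A coordinate cone in `ℝ^n`. -/
def IsCoordCone {n : ℕ} (K : Set (Fin n → ℝ)) : Prop :=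
  ∃ (J : Finset (Fin n)) (σ : Fin n → Ordering) (c : Fin n → ℝ),
    K = {x | ∀ j ∈ J,
      match σ j with
      | Ordering.lt => x j < c j
      | Ordering.eq => x j = c j
      | Ordering.gt => x j > c j}

/-- The intersection of an open toric cube with any coordinate cone is connected. -/
theorem openToricCube_inter_coordCone_connected {d n : ℕ}
    (a : Fin n → Fin d → ℕ) (K : Set (Fin n → ℝ)) (hK : IsCoordCone K) :
    IsPreconnected ((monomialMap a '' openUnitCube d) ∩ K) := by
  obtain ⟨J, σ, c, rfl⟩ := hK
  set g : (Fin d → ℝ) → Fin n → ℝ := fun u => monomialMap a fun i => Real.exp (-u i)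
    with hgdef
  have hg : ∀ (u : Fin d → ℝ) (j : Fin n),
      g u j = Real.exp (-(∑ i, (a j i : ℝ) * u i)) := by
    intro u j
    simp only [hgdef, monomialMap]
    calc ∏ i, Real.exp (-u i) ^ a j i
        = ∏ i, Real.exp ((a j i : ℝ) * (-u i)) := by
          refine Finset.prod_congr rfl fun i _ => ?_
          rw [← Real.exp_nat_mul]
      _ = Real.exp (∑ i, (a j i : ℝ) * (-u i)) := (Real.exp_sum _ _).symm
      _ = Real.exp (-(∑ i, (a j i : ℝ) * u i)) := by
          congr 1
          simp [mul_neg]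
  have hlin : ∀ j : Fin n, IsLinearMap ℝ (fun u : Fin d → ℝ => ∑ i, (a j i : ℝ) * u i) := by
    intro j
    constructor
    · intro u v
      simp [mul_add, Finset.sum_add_distrib]
    · intro r u
      simp [Finset.mul_sum, Pi.smul_apply, smul_eq_mul, mul_left_comm]
  -- convexity of each constraint set
  have hconv : ∀ j : Fin n, Convex ℝ {u : Fin d → ℝ | match σ j with
      | Ordering.lt => g u j < c j
      | Ordering.eq => g u j = c j
      | Ordering.gt => g u j > c j} := by
    intro j
    cases hσ : σ j with
    | lt =>
        simp only [hσ]
        rcases le_or_gt (c j) 0 with hc | hc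
        · have : {u : Fin d → ℝ | g u j < c j} = ∅ := by
            ext u
            simp only [Set.mem_setOf_eq, Set.mem_empty_iff_false, iff_false, not_lt]
            exact hc.trans ((hg u j) ▸ (Real.exp_pos _).le)
          rw [this]; exact convex_empty
        · have : {u : Fin d → ℝ | g u j < c j}
              = (fun u : Fin d → ℝ => ∑ i, (a j i : ℝ) * u i) ⁻¹' Set.Ioi (-Real.log (c j)) := by
            ext u
            simp only [Set.mem_setOf_eq, Set.mem_preimage, Set.mem_Ioi, hg u j]
            rw [← Real.lt_log_iff_exp_lt hc]
            constructor <;> intro h <;> linarith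
          rw [this]
          exact (convex_Ioi _).is_linear_preimage (hlin j)
    | eq =>
        simp only [hσ]
        rcases le_or_gt (c j) 0 with hc | hc
        · have : {u : Fin d → ℝ | g u j = c j} = ∅ := by
            ext u
            simp only [Set.mem_setOf_eq, Set.mem_empty_iff_false, iff_false]
            intro h
            have := Real.exp_pos (-(∑ i, (a j i : ℝ) * u i))
            rw [← hg u j, h] at this
            linarith
          rw [this]; exact convex_empty
        · have : {u : Fin d → ℝ | g u j = c j}
              = (fun u : Fin d → ℝ => ∑ i, (a j i : ℝ) * u i) ⁻¹' {-Real.log (c j)} := by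
            ext u
            simp only [Set.mem_setOf_eq, Set.mem_preimage, Set.mem_singleton_iff, hg u j]
            constructor
            · intro h
              have : -(∑ i, (a j i : ℝ) * u i) = Real.log (c j) := by
                rw [← h, Real.log_exp]
              linarith
            · intro h
              rw [h]
              simp [Real.exp_log hc]
          rw [this]
          exact (convex_singleton _).is_linear_preimage (hlin j)
    | gt =>
        simp only [hσ]
        rcases le_or_gt (c j) 0 with hc | hc
        · have : {u : Fin d → ℝ | g u j > c j} = Set.univ := by
            ext u
            simp only [Set.mem_setOf_eq, Set.mem_univ, iff_true]
            exact lt_of_le_of_lt hc ((hg u j) ▸ Real.exp_pos _)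
          rw [this]; exact convex_univ
        · have : {u : Fin d → ℝ | g u j > c j}
              = (fun u : Fin d → ℝ => ∑ i, (a j i : ℝ) * u i) ⁻¹' Set.Iio (-Real.log (c j)) := by
            ext u
            simp only [Set.mem_setOf_eq, Set.mem_preimage, Set.mem_Iio, hg u j]
            rw [gt_iff_lt, ← Real.log_lt_iff_lt_exp hc]
            constructor <;> intro h <;> linarith
          rw [this]
          exact (convex_Iio _).is_linear_preimage (hlin j)
  set V : Set (Fin d → ℝ) := (Set.univ.pi fun _ : Fin d => Set.Ioi (0 : ℝ)) ∩
      ⋂ j ∈ J, {u : Fin d → ℝ | match σ j with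
        | Ordering.lt => g u j < c j
        | Ordering.eq => g u j = c j
        | Ordering.gt => g u j > c j} with hVdef
  have hVconv : Convex ℝ V :=
    (convex_pi fun i _ => convex_Ioi 0).inter
      (convex_iInter fun j => convex_iInter fun _ => hconv j)
  have hgc : Continuous g := by
    simp only [hgdef, monomialMap]
    exact continuous_pi fun i => continuous_finset_prod _ fun k _ =>
      (Real.continuous_exp.comp (continuous_apply k).neg).pow _
  have himg : g '' V = (monomialMap a '' openUnitCube d) ∩ {x | ∀ j ∈ J,
      match σ j with
      | Ordering.lt => x j < c j
      | Ordering.eq => x j = c j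
      | Ordering.gt => x j > c j} := by
    ext x
    constructor
    · rintro ⟨u, ⟨hu1, hu2⟩, rfl⟩
      refine ⟨⟨fun i => Real.exp (-u i), fun i _ => ⟨Real.exp_pos _, ?_⟩, rfl⟩, ?_⟩
      · exact Real.exp_lt_one_iff.mpr (neg_lt_zero.mpr (hu1 i (Set.mem_univ i)))
      · intro j hj
        exact Set.mem_iInter₂.mp hu2 j hj
    · rintro ⟨⟨t, ht, rfl⟩, hx⟩
      have hteq : (fun i => Real.exp (-(-Real.log (t i)))) = t := by
        funext i
        rw [neg_neg, Real.exp_log (ht i (Set.mem_univ i)).1]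
      have hgu : g (fun i => -Real.log (t i)) = monomialMap a t := by
        rw [hgdef]
        exact congrArg (monomialMap a) hteq
      refine ⟨fun i => -Real.log (t i), ⟨?_, ?_⟩, hgu⟩
      · intro i _
        exact neg_pos.mpr (Real.log_neg (ht i (Set.mem_univ i)).1 (ht i (Set.mem_univ i)).2)
      · refine Set.mem_iInter₂.mpr fun j hj => ?_
        have := hx j hj
        simp only [Set.mem_setOf_eq, hgu]
        exact this
  rw [← himg]
  exact hVconv.isPreconnected.image g hgc.continuousOn
end

section
/- Let A = {a_1,...,a_n} ⊂ ℕ^d, C = f_A((0,1)^d), and let π_T : ℝ^n → T be the orthogonal projection onto a coordinate subspace T of ℝ^n. Then every nonempty fiber of the restriction π_T|_C is connected; moreover, if the fiber is zero-dimensional then it is a single point. -/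
open MeasureTheory

/-- Orthogonal projection onto the coordinate subspace spanned by the coordinates in `J`:
the complementary coordinates are set to zero. -/
def coordProj {n : ℕ} (J : Finset (Fin n)) (x : Fin n → ℝ) : Fin n → ℝ :=
  fun j => if j ∈ J then x j else 0

/-!
In logarithmic coordinates `t = exp u` the monomial map becomes `u ↦ exp (A u)` with `A` the
exponent matrix, and the cube becomes the negative orthant. A fiber of the coordinate projection
is then the continuous image of the intersection of the orthant with the preimage under `A` of a
product of sets each of which is empty, a point or a line, hence of a convex set: it is connected.
A connected metric space with two points has Hausdorff dimension at least one, since distance to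
one of them maps it onto a nondegenerate interval.
-/

open Set Matrix

theorem IsPreconnected.subsingleton_of_dimH_eq_zero {X : Type*} [MetricSpace X] {s : Set X}
    (hs : IsPreconnected s) (hdim : dimH s = 0) : s.Subsingleton := by
  intro q hq r hr
  by_contra hqr
  have hIcc : Icc 0 (dist q r) ⊆ dist q '' s :=
    (hs.image _ (continuous_const.dist continuous_id).continuousOn).Icc_subset
      ⟨q, hq, dist_self q⟩ ⟨r, hr, rfl⟩
  have hint : (interior (Icc 0 (dist q r))).Nonempty := by
    rw [interior_Icc, nonempty_Ioo]
    exact dist_pos.2 hqr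
  have : (1 : ENNReal) ≤ 0 :=
    calc (1 : ENNReal) = dimH (Icc 0 (dist q r)) := by
          rw [Real.dimH_of_nonempty_interior hint, Module.finrank_self, Nat.cast_one]
      _ ≤ dimH (dist q '' s) := dimH_mono hIcc
      _ ≤ dimH s := (LipschitzWith.dist_right q).dimH_image_le s
      _ = 0 := hdim
  exact one_ne_zero (nonpos_iff_eq_zero.1 this)

theorem convex_setOf_coordProj_exp_eq {n : ℕ} (J : Finset (Fin n)) (y : Fin n → ℝ) :
    Convex ℝ {v : Fin n → ℝ | coordProj J (fun i => Real.exp (v i)) = y} := by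
  have hpi : {v : Fin n → ℝ | coordProj J (fun i => Real.exp (v i)) = y} =
      univ.pi fun i => {r | (if i ∈ J then Real.exp r else 0) = y i} := by
    ext v
    simp [coordProj, funext_iff]
  rw [hpi]
  refine convex_pi fun i _ => ?_
  by_cases hi : i ∈ J
  · simp only [hi, if_true]
    exact (subsingleton_singleton.preimage Real.exp_injective).convex
  · by_cases hy : 0 = y i <;> simp [hi, hy, convex_univ, convex_empty]

def exponentMatrix {d n : ℕ} (a : Fin n → Fin d → ℕ) : Matrix (Fin n) (Fin d) ℝ :=
  of fun i j => (a i j : ℝ)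

theorem monomialMap_exp {d n : ℕ} (a : Fin n → Fin d → ℕ) (u : Fin d → ℝ) :
    monomialMap a (fun j => Real.exp (u j)) = fun i => Real.exp ((exponentMatrix a *ᵥ u) i) := by
  funext i
  simp only [monomialMap, exponentMatrix, mulVec, dotProduct, of_apply, Real.exp_sum,
    ← Real.exp_nat_mul]

theorem continuous_monomialMap {d n : ℕ} (a : Fin n → Fin d → ℕ) : Continuous (monomialMap a) :=
  continuous_pi fun _ => continuous_finsetProd _ fun j _ => (continuous_apply j).pow _

theorem openUnitCube_eq_image_exp (d : ℕ) :
    openUnitCube d = Pi.map (fun _ => Real.exp) '' univ.pi fun _ : Fin d => Iio 0 := by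
  simp only [openUnitCube, piMap_image_univ_pi, Real.image_exp_Iio, Real.exp_zero]

theorem monomialMap_fiber_eq_image_exp {d n : ℕ} (a : Fin n → Fin d → ℕ) (J : Finset (Fin n))
    (y : Fin n → ℝ) :
    (monomialMap a '' openUnitCube d) ∩ coordProj J ⁻¹' {y} =
      (monomialMap a ∘ Pi.map fun _ => Real.exp) ''
        ((univ.pi fun _ => Iio 0) ∩ (exponentMatrix a).mulVecLin ⁻¹'
          {v | coordProj J (fun i => Real.exp (v i)) = y}) := by
  rw [openUnitCube_eq_image_exp, ← image_comp, ← image_inter_preimage]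
  congr 2
  ext u
  change coordProj J (monomialMap a fun j => Real.exp (u j)) = y ↔ _
  rw [monomialMap_exp]
  rfl

/-- Every nonempty fiber of the restriction to the open toric cube `C` of the orthogonal
projection onto a coordinate subspace is connected; if moreover the fiber is
zero-dimensional (Hausdorff dimension 0) then it is a single point. -/
theorem openToricCube_proj_fibers {d n : ℕ} (a : Fin n → Fin d → ℕ)
    (J : Finset (Fin n)) (y : Fin n → ℝ)
    (hfib : ((monomialMap a '' openUnitCube d) ∩ coordProj J ⁻¹' {y}).Nonempty) :
    IsPreconnected ((monomialMap a '' openUnitCube d) ∩ coordProj J ⁻¹' {y}) ∧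
    (dimH ((monomialMap a '' openUnitCube d) ∩ coordProj J ⁻¹' {y}) = 0 →
      ∃ p, (monomialMap a '' openUnitCube d) ∩ coordProj J ⁻¹' {y} = {p}) := by
  have hconn : IsPreconnected ((monomialMap a '' openUnitCube d) ∩ coordProj J ⁻¹' {y}) := by
    rw [monomialMap_fiber_eq_image_exp]
    refine IsPreconnected.image (Convex.isPreconnected ?_) _ (Continuous.continuousOn ?_)
    · exact (convex_pi fun _ _ => convex_Iio 0).inter
        ((convex_setOf_coordProj_exp_eq J y).linear_preimage _)
    · exact (continuous_monomialMap a).comp (continuous_pi fun j => (continuous_apply j).rexp)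
  refine ⟨hconn, fun hdim => ?_⟩
  obtain ⟨p, hp⟩ := hfib
  exact ⟨p, (hconn.subsingleton_of_dimH_eq_zero hdim).eq_singleton_of_mem hp⟩
end

section
/- Let A = {a_1,...,a_n} ⊂ ℕ^d, L : ℝ^d → ℝ^n the linear map z ↦ (a_1·z,...,a_n·z), and V = L(ℝ^d) its image, a linear subspace of ℝ^n of dimension k. If T is a coordinate subspace of ℝ^n such that the orthogonal projection π_T restricted to V is injective, then dim(T) ≥ k and π_T restricted to the open toric cube C = f_A((0,1)^d) is injective. -/
/-- The linear map `L : ℝ^d → ℝ^n`, `z ↦ (a_1 · z, ..., a_n · z)`. -/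
noncomputable def dotLinearMap {d n : ℕ} (a : Fin n → Fin d → ℕ) :
    (Fin d → ℝ) →ₗ[ℝ] (Fin n → ℝ) :=
  LinearMap.pi fun i => ∑ j, (a i j : ℝ) • LinearMap.proj j

lemma dotLinearMap_apply {d n : ℕ} (a : Fin n → Fin d → ℕ) (z : Fin d → ℝ) (i : Fin n) :
    dotLinearMap a z i = ∑ j, (a i j : ℝ) * z j := by
  simp [dotLinearMap]

lemma monomialMap_eq_exp {d n : ℕ} (a : Fin n → Fin d → ℕ) {t : Fin d → ℝ}
    (ht : t ∈ openUnitCube d) (i : Fin n) :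
    monomialMap a t i = Real.exp (dotLinearMap a (fun j => Real.log (t j)) i) := by
  rw [dotLinearMap_apply, Real.exp_sum]
  apply Finset.prod_congr rfl
  intro j _
  have h0 : 0 < t j := (ht j (Set.mem_univ j)).1
  rw [Real.exp_nat_mul, Real.exp_log h0]

lemma dotLinearMap_log_mem {d n : ℕ} (a : Fin n → Fin d → ℕ) (t : Fin d → ℝ) :
    dotLinearMap a (fun j => Real.log (t j)) ∈
      (LinearMap.range (dotLinearMap a) : Set (Fin n → ℝ)) :=
  LinearMap.mem_range_self _ _

/-- If `V = L(ℝ^d)` has dimension `k` and `π_T` is injective on `V` for a coordinate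
subspace `T` (spanned by the coordinates in `J`), then `dim T ≥ k` and `π_T` is injective
on the open toric cube `C = f_A((0,1)^d)`. -/
theorem coordProj_injOn_openToricCube {d n k : ℕ} (a : Fin n → Fin d → ℕ)
    (J : Finset (Fin n))
    (hrank : Module.finrank ℝ (LinearMap.range (dotLinearMap a)) = k)
    (hinj : Set.InjOn (coordProj J) (LinearMap.range (dotLinearMap a) : Set (Fin n → ℝ))) :
    k ≤ J.card ∧
    Set.InjOn (coordProj J) (monomialMap a '' openUnitCube d) := by
  constructor
  · -- dimension bound
    subst hrank
    set R := LinearMap.range (dotLinearMap a)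
    let φ : R →ₗ[ℝ] ({j // j ∈ J} → ℝ) :=
      (LinearMap.funLeft ℝ ℝ (fun j : {j // j ∈ J} => (j : Fin n))).comp R.subtype
    have hφ : Function.Injective φ := by
      intro v w hvw
      apply Subtype.ext
      apply hinj v.2 w.2
      funext i
      simp only [coordProj]
      split_ifs with hi
      · exact congrFun hvw ⟨i, hi⟩
      · rfl
    have := LinearMap.finrank_le_finrank_of_injective hφ
    simpa [Module.finrank_fintype_fun_eq_card] using this
  · rintro _ ⟨u, hu, rfl⟩ _ ⟨v, hv, rfl⟩ h
    have hLu := dotLinearMap_log_mem a u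
    have hLv := dotLinearMap_log_mem a v
    have key : dotLinearMap a (fun j => Real.log (u j)) =
        dotLinearMap a (fun j => Real.log (v j)) := by
      apply hinj hLu hLv
      funext i
      simp only [coordProj]
      split_ifs with hi
      · have hi' : monomialMap a u i = monomialMap a v i := by
          have := congrFun h i
          simpa [coordProj, hi] using this
        rw [monomialMap_eq_exp a hu i, monomialMap_eq_exp a hv i] at hi'
        exact Real.exp_injective hi'
      · rfl
    funext i
    rw [monomialMap_eq_exp a hu i, monomialMap_eq_exp a hv i, key]
end

section
/- Let X ⊆ ℝ^n be an open set such that X ∩ S is connected for every affine coordinate subspace S of ℝ^n. Then X ∩ K is connected for every coordinate cone K of ℝ^n. -/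
open Function Set

lemma openim {n : ℕ} (W E : Set (Fin n → ℝ)) (hW : IsOpen W) (j : Fin n)
    (hE : ∀ x ∈ E, ∀ t : ℝ, Function.update x j t ∈ E) :
    IsOpen ((fun x => x j) '' (W ∩ E)) := by
  rw [Metric.isOpen_iff]
  rintro t ⟨x, ⟨hxW, hxE⟩, rfl⟩
  obtain ⟨ε, hε, hball⟩ := Metric.isOpen_iff.1 hW x hxW
  refine ⟨ε, hε, fun s hs => ?_⟩
  refine ⟨Function.update x j s, ⟨hball ?_, hE x hxE s⟩, by simp⟩
  rw [Metric.mem_ball, dist_pi_lt_iff hε]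
  intro i
  rcases eq_or_ne i j with rfl | h
  · simpa [Real.dist_eq] using hs
  · simp [h, hε]

lemma core {n : ℕ} (W E : Set (Fin n → ℝ)) (hW : IsOpen W) (j : Fin n)
    (hE : ∀ x ∈ E, ∀ t : ℝ, Function.update x j t ∈ E)
    (I : Set ℝ) (hI : IsOpen I) (hIo : I.OrdConnected)
    (hYconn : IsPreconnected (W ∩ E))
    (hfib : ∀ t : ℝ, IsPreconnected ((W ∩ E) ∩ {x | x j = t})) :
    IsPreconnected ((W ∩ E) ∩ {x | x j ∈ I}) := by
  set Y := W ∩ E with hY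
  set Z := Y ∩ {x | x j ∈ I} with hZ
  intro u v hu hv hcov ⟨y₁, hy₁⟩ ⟨y₂, hy₂⟩
  by_contra hne
  rw [Set.not_nonempty_iff_eq_empty] at hne
  set π : (Fin n → ℝ) → ℝ := fun x => x j with hπ
  set T₁ := π '' (Z ∩ u) with hT₁
  set T₂ := π '' (Z ∩ v) with hT₂
  have hZu : Z ∩ u = ((W ∩ {x | x j ∈ I} ∩ u) ∩ E) := by
    rw [hZ, hY]; ext x; simp [mem_setOf_eq]; tauto
  have hZv : Z ∩ v = ((W ∩ {x | x j ∈ I} ∩ v) ∩ E) := by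
    rw [hZ, hY]; ext x; simp [mem_setOf_eq]; tauto
  have hT₁o : IsOpen T₁ := by
    rw [hT₁, hZu]
    exact openim _ E (((hW.inter (hI.preimage (continuous_apply j))).inter hu)) j hE
  have hT₂o : IsOpen T₂ := by
    rw [hT₂, hZv]
    exact openim _ E (((hW.inter (hI.preimage (continuous_apply j))).inter hv)) j hE
  have hP : IsPreconnected (π '' Y) := hYconn.image π (continuous_apply j).continuousOn
  have hIp : IsPreconnected ((π '' Y) ∩ I) :=
    (hP.ordConnected.inter hIo).isPreconnected
  have hIpsub : (π '' Y) ∩ I ⊆ T₁ ∪ T₂ := by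
    rintro t ⟨⟨y, hyY, rfl⟩, htI⟩
    have hyZ : y ∈ Z := ⟨hyY, htI⟩
    rcases hcov hyZ with h | h
    · exact Or.inl ⟨y, ⟨hyZ, h⟩, rfl⟩
    · exact Or.inr ⟨y, ⟨hyZ, h⟩, rfl⟩
  have h1 : ((π '' Y) ∩ I ∩ T₁).Nonempty :=
    ⟨π y₁, ⟨⟨y₁, hy₁.1.1, rfl⟩, hy₁.1.2⟩, ⟨y₁, ⟨hy₁.1, hy₁.2⟩, rfl⟩⟩
  have h2 : ((π '' Y) ∩ I ∩ T₂).Nonempty :=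
    ⟨π y₂, ⟨⟨y₂, hy₂.1.1, rfl⟩, hy₂.1.2⟩, ⟨y₂, ⟨hy₂.1, hy₂.2⟩, rfl⟩⟩
  obtain ⟨t, htIp, ht₁, ht₂⟩ := hIp T₁ T₂ hT₁o hT₂o hIpsub h1 h2
  obtain ⟨z₁, hz₁, hz₁t⟩ := ht₁
  obtain ⟨z₂, hz₂, hz₂t⟩ := ht₂
  have hfibcov : Y ∩ {x | x j = t} ⊆ u ∪ v := by
    rintro x ⟨hxY, hxt⟩
    exact hcov ⟨hxY, by rw [mem_setOf_eq, hxt]; exact htIp.2⟩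
  have hfu : ((Y ∩ {x | x j = t}) ∩ u).Nonempty := ⟨z₁, ⟨hz₁.1.1, hz₁t⟩, hz₁.2⟩
  have hfv : ((Y ∩ {x | x j = t}) ∩ v).Nonempty := ⟨z₂, ⟨hz₂.1.1, hz₂t⟩, hz₂.2⟩
  obtain ⟨w, hwF, hwu, hwv⟩ := hfib t u v hu hv hfibcov hfu hfv
  have : w ∈ Z ∩ (u ∩ v) := ⟨⟨hwF.1, by rw [mem_setOf_eq, hwF.2]; exact htIp.2⟩, hwu, hwv⟩
  rw [hne] at this
  exact this

def ocond (o : Ordering) (a b : ℝ) : Prop :=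
  match o with | .lt => a < b | .eq => a = b | .gt => a > b

def ocondO (o : Ordering) (a b : ℝ) : Prop :=
  match o with | .lt => a < b | .eq => True | .gt => a > b

def coneSet {n : ℕ} (J : Finset (Fin n)) (σ : Fin n → Ordering) (c : Fin n → ℝ) :
    Set (Fin n → ℝ) := {x | ∀ j ∈ J, ocond (σ j) (x j) (c j)}

lemma ocond_eq_ocondO {o : Ordering} (h : o ≠ .eq) (a b : ℝ) : ocond o a b ↔ ocondO o a b := by
  cases o <;> simp_all [ocond, ocondO]

lemma openOcondO {n : ℕ} (F : Finset (Fin n)) (σ : Fin n → Ordering) (c : Fin n → ℝ) :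
    IsOpen {x : Fin n → ℝ | ∀ j ∈ F, ocondO (σ j) (x j) (c j)} := by
  have : {x : Fin n → ℝ | ∀ j ∈ F, ocondO (σ j) (x j) (c j)}
      = ⋂ j ∈ F, {x : Fin n → ℝ | ocondO (σ j) (x j) (c j)} := by
    ext x; simp [Set.mem_iInter]
  rw [this]
  refine isOpen_biInter_finset fun j _ => ?_
  cases h : σ j <;> simp only [ocondO]
  · exact isOpen_lt (continuous_apply j) continuous_const
  · simp only [setOf_true]; exact isOpen_univ
  · exact isOpen_lt continuous_const (continuous_apply j)

lemma main_aux {n : ℕ} (X : Set (Fin n → ℝ)) (hopen : IsOpen X)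
    (haff : ∀ (J : Finset (Fin n)) (c : Fin n → ℝ),
      IsPreconnected (X ∩ {x | ∀ j ∈ J, x j = c j})) :
    ∀ m : ℕ, ∀ (J : Finset (Fin n)) (σ : Fin n → Ordering) (c : Fin n → ℝ),
      (J.filter (fun j => σ j ≠ Ordering.eq)).card ≤ m →
      IsPreconnected (X ∩ coneSet J σ c) := by
  intro m
  induction m with
  | zero =>
    intro J σ c hcard
    have hall : ∀ j ∈ J, σ j = .eq := by
      intro j hj; by_contra h
      have : j ∈ J.filter (fun j => σ j ≠ Ordering.eq) := Finset.mem_filter.2 ⟨hj, h⟩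
      have := Finset.card_pos.2 ⟨j, this⟩
      omega
    have hKeq : coneSet J σ c = {x | ∀ j ∈ J, x j = c j} := by
      ext x
      simp only [coneSet, mem_setOf_eq]
      refine forall_congr' fun j => ?_
      refine imp_congr_right fun hj => ?_
      rw [hall j hj]
      exact Iff.rfl
    rw [hKeq]; exact haff J c
  | succ m ih =>
    intro J σ c hcard
    by_cases hm : (J.filter (fun j => σ j ≠ Ordering.eq)).card ≤ m
    · exact ih J σ c hm
    have hpos : (J.filter (fun j => σ j ≠ Ordering.eq)).Nonempty :=
      Finset.card_pos.1 (by omega)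
    obtain ⟨j₀, hj₀f⟩ := hpos
    obtain ⟨hj₀J, hj₀ne⟩ := Finset.mem_filter.1 hj₀f
    set J' := J.erase j₀ with hJ'
    obtain ⟨I, hIopen, hIord, hIcond⟩ :
        ∃ I : Set ℝ, IsOpen I ∧ I.OrdConnected ∧
          ∀ a : ℝ, ocond (σ j₀) a (c j₀) ↔ a ∈ I := by
      cases h : σ j₀ with
      | lt => exact ⟨Set.Iio (c j₀), isOpen_Iio, Set.ordConnected_Iio,
          fun a => by simp [ocond]⟩
      | eq => exact absurd h hj₀ne
      | gt => exact ⟨Set.Ioi (c j₀), isOpen_Ioi, Set.ordConnected_Ioi,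
          fun a => by simp [ocond]⟩
    set W := X ∩ {x : Fin n → ℝ | ∀ j ∈ J'.filter (fun j => σ j ≠ Ordering.eq),
      ocondO (σ j) (x j) (c j)} with hWdef
    set E := {x : Fin n → ℝ | ∀ j ∈ J'.filter (fun j => σ j = Ordering.eq),
      x j = c j} with hEdef
    have hWopen : IsOpen W := hopen.inter (openOcondO _ σ c)
    have hEinv : ∀ x ∈ E, ∀ t : ℝ, Function.update x j₀ t ∈ E := by
      intro x hx t j hj
      have hjJ' : j ∈ J' := Finset.filter_subset _ _ hj
      have hne : j ≠ j₀ := Finset.ne_of_mem_erase hjJ'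
      rw [Function.update_of_ne hne]
      exact hx j hj
    have hdecomp : X ∩ coneSet J' σ c = W ∩ E := by
      ext x
      simp only [hWdef, hEdef, coneSet, mem_inter_iff, mem_setOf_eq, Finset.mem_filter]
      constructor
      · rintro ⟨hxX, hcone⟩
        refine ⟨⟨hxX, fun j hj => (ocond_eq_ocondO hj.2 _ _).1 (hcone j hj.1)⟩,
               fun j hj => ?_⟩
        have := hcone j hj.1
        rwa [hj.2] at this
      · rintro ⟨⟨hxX, hne⟩, heq⟩
        refine ⟨hxX, fun j hj => ?_⟩
        by_cases h : σ j = .eq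
        · have := heq j ⟨hj, h⟩; simp [ocond, h, this]
        · exact (ocond_eq_ocondO h _ _).2 (hne j ⟨hj, h⟩)
    have hcard' : (J'.filter (fun j => σ j ≠ Ordering.eq)).card ≤ m := by
      rw [hJ', Finset.filter_erase, Finset.card_erase_of_mem hj₀f]
      omega
    have hYconn : IsPreconnected (W ∩ E) := hdecomp ▸ ih J' σ c hcard'
    have hfib : ∀ t : ℝ, IsPreconnected ((W ∩ E) ∩ {x | x j₀ = t}) := by
      intro t
      have hcard'' : (J.filter (fun j =>
          (Function.update σ j₀ Ordering.eq j) ≠ Ordering.eq)).card ≤ m := by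
        have hfe : J.filter (fun j => (Function.update σ j₀ Ordering.eq j) ≠ Ordering.eq)
            = (J.filter (fun j => σ j ≠ Ordering.eq)).erase j₀ := by
          ext j
          by_cases h : j = j₀
          · subst h; simp
          · simp [Finset.mem_filter, Finset.mem_erase, Function.update_of_ne h, h]
        rw [hfe, Finset.card_erase_of_mem hj₀f]; omega
      have heqs : (W ∩ E) ∩ {x | x j₀ = t}
          = X ∩ coneSet J (Function.update σ j₀ Ordering.eq) (Function.update c j₀ t) := by
        rw [← hdecomp]
        ext x
        simp only [coneSet, mem_inter_iff, mem_setOf_eq]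
        constructor
        · rintro ⟨⟨hxX, hcone⟩, hxt⟩
          refine ⟨hxX, fun j hj => ?_⟩
          by_cases h : j = j₀
          · subst h; simp [Function.update_self, ocond, hxt]
          · rw [Function.update_of_ne h, Function.update_of_ne h]
            exact hcone j (Finset.mem_erase.2 ⟨h, hj⟩)
        · rintro ⟨hxX, hcone⟩
          refine ⟨⟨hxX, fun j hj => ?_⟩, ?_⟩
          · have h : j ≠ j₀ := Finset.ne_of_mem_erase hj
            have := hcone j (Finset.mem_of_mem_erase hj)
            rwa [Function.update_of_ne h, Function.update_of_ne h] at this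
          · have := hcone j₀ hj₀J
            simpa [Function.update_self, ocond] using this
      rw [heqs]; exact ih J _ _ hcard''
    have hcore := core W E hWopen j₀ hEinv I hIopen hIord hYconn hfib
    have hfinal : X ∩ coneSet J σ c = (W ∩ E) ∩ {x | x j₀ ∈ I} := by
      rw [← hdecomp]
      ext x
      simp only [coneSet, mem_inter_iff, mem_setOf_eq]
      constructor
      · rintro ⟨hxX, hcone⟩
        exact ⟨⟨hxX, fun j hj => hcone j (Finset.mem_of_mem_erase hj)⟩,
          (hIcond _).1 (hcone j₀ hj₀J)⟩
      · rintro ⟨⟨hxX, hcone⟩, hxI⟩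
        refine ⟨hxX, fun j hj => ?_⟩
        by_cases h : j = j₀
        · subst h; exact (hIcond _).2 hxI
        · exact hcone j (Finset.mem_erase.2 ⟨h, hj⟩)
    rw [hfinal]; exact hcore

/-- If an open set `X ⊆ ℝ^n` has connected intersection with every affine coordinate
subspace, then it has connected intersection with every coordinate cone. -/
theorem inter_coordCone_connected_of_inter_affine_connected {n : ℕ}
    (X : Set (Fin n → ℝ)) (hopen : IsOpen X)
    (haff : ∀ S : Set (Fin n → ℝ), IsAffineCoordSubspace S → IsPreconnected (X ∩ S)) :
    ∀ K : Set (Fin n → ℝ), IsCoordCone K → IsPreconnected (X ∩ K) := by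
  rintro K ⟨J, σ, c, rfl⟩
  have h : {x : Fin n → ℝ | ∀ j ∈ J,
      match σ j with
      | Ordering.lt => x j < c j
      | Ordering.eq => x j = c j
      | Ordering.gt => x j > c j} = coneSet J σ c := by
    ext x
    refine forall_congr' fun j => imp_congr_right fun _ => ?_
    cases σ j <;> rfl
  rw [h]
  exact main_aux X hopen (fun J c => haff _ ⟨J, c, rfl⟩) _ J σ c le_rfl
end
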